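/- arXiv:1308.5809 — 4 statements merged into one kernel-verified Lean document; each statement's English description precedes it below -/
import Mathlib

section
/- Validity of the convex-variant IASB2 tuning value (equation (39)): In the per-user per-tone spectrum optimization setup, let L* = Σ_{m∈I} w_m·s̃_m·a_m²·(s̃_m + 2·int_m(M)) / (2·(rec_m(M)·int_m(M))²) and set L = min( w/(2·(M + int)²), L* ). Then: (i) the function f1_IASB2(s) = −w·log(1 + s/int) − L·(s − s̃)² is convex on [0, M]; and (ii) the function f2_IASB2(s) = −Σ_{m∈I} w_m·log(1 + s̃_m/int_m(s)) + L·(s − s̃)² is concave on [0, M]. -/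
/-!
Both claims are second-derivative tests on `[0, M]`. For `f1` the second derivative
`w / (int + s)² - 2L` is smallest at `s = M`, where it is nonnegative by the first entry of the
minimum. For `f2`, with `t_m = a_m s + z_m`, the term `log (1 + s̃_m / t_m)` has second derivative
`a_m² (t_m⁻² - (s̃_m + t_m)⁻²)` in `s`. This is antitone in `t_m`, hence smallest at `s = M`, where
the weighted sum is exactly `2 L*`.
-/

open Set Real

theorem convexOn_of_hasDerivAt2_nonneg {D : Set ℝ} (hD : Convex ℝ D) {f f' f'' : ℝ → ℝ}
    (hf' : ∀ x ∈ D, HasDerivAt f (f' x) x) (hf'' : ∀ x ∈ D, HasDerivAt f' (f'' x) x)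
    (hf''₀ : ∀ x ∈ D, 0 ≤ f'' x) : ConvexOn ℝ D f :=
  convexOn_of_hasDerivWithinAt2_nonneg hD (fun x hx ↦ (hf' x hx).continuousAt.continuousWithinAt)
    (fun x hx ↦ (hf' x (interior_subset hx)).hasDerivWithinAt)
    (fun x hx ↦ (hf'' x (interior_subset hx)).hasDerivWithinAt)
    (fun x hx ↦ hf''₀ x (interior_subset hx))

theorem concaveOn_of_hasDerivAt2_nonpos {D : Set ℝ} (hD : Convex ℝ D) {f f' f'' : ℝ → ℝ}
    (hf' : ∀ x ∈ D, HasDerivAt f (f' x) x) (hf'' : ∀ x ∈ D, HasDerivAt f' (f'' x) x)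
    (hf''₀ : ∀ x ∈ D, f'' x ≤ 0) : ConcaveOn ℝ D f :=
  concaveOn_of_hasDerivWithinAt2_nonpos hD (fun x hx ↦ (hf' x hx).continuousAt.continuousWithinAt)
    (fun x hx ↦ (hf' x (interior_subset hx)).hasDerivWithinAt)
    (fun x hx ↦ (hf'' x (interior_subset hx)).hasDerivWithinAt)
    (fun x hx ↦ hf''₀ x (interior_subset hx))

theorem hasDerivAt_sub_sq (c x : ℝ) : HasDerivAt (fun s ↦ (s - c) ^ 2) (2 * (x - c)) x :=
  (((hasDerivAt_id x).sub_const c).fun_pow 2).congr_deriv (by simp)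

theorem hasDerivAt_log_one_add_div_const {c x : ℝ} (hc : c ≠ 0) (hx : c + x ≠ 0) :
    HasDerivAt (fun s ↦ log (1 + s / c)) (c + x)⁻¹ x := by
  have h1 : 1 + x / c ≠ 0 := by
    rw [one_add_div hc]; exact div_ne_zero hx hc
  refine ((((hasDerivAt_id x).div_const c).const_add 1).log h1).congr_deriv ?_
  simp only [id]
  field_simp

theorem hasDerivAt_inv_const_add {c x : ℝ} (hx : c + x ≠ 0) :
    HasDerivAt (fun s ↦ (c + s)⁻¹) (-((c + x) ^ 2)⁻¹) x :=
  (((hasDerivAt_id x).const_add c).fun_inv hx).congr_deriv (by simp; ring)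

theorem hasDerivAt_log_one_add_div_affine {S a z x : ℝ} (ht : a * x + z ≠ 0)
    (hSt : S + (a * x + z) ≠ 0) :
    HasDerivAt (fun s ↦ log (1 + S / (a * s + z)))
      (a * ((S + (a * x + z))⁻¹ - (a * x + z)⁻¹)) x := by
  have hd : HasDerivAt (fun s ↦ a * s + z) a x := by
    simpa using ((hasDerivAt_id x).const_mul a).add_const z
  have h1 : 1 + S / (a * x + z) ≠ 0 := by
    rw [one_add_div ht, add_comm]; exact div_ne_zero hSt ht
  refine ((((hasDerivAt_const x S).fun_div hd ht).const_add 1).log h1).congr_deriv ?_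
  rw [one_add_div ht, add_comm (a * x + z)]
  field_simp
  ring

theorem hasDerivAt_mul_inv_add_affine_sub_inv_affine {S a z x : ℝ} (ht : a * x + z ≠ 0)
    (hSt : S + (a * x + z) ≠ 0) :
    HasDerivAt (fun s ↦ a * ((S + (a * s + z))⁻¹ - (a * s + z)⁻¹))
      (a ^ 2 * (((a * x + z) ^ 2)⁻¹ - ((S + (a * x + z)) ^ 2)⁻¹)) x := by
  have hd : HasDerivAt (fun s ↦ a * s + z) a x := by
    simpa using ((hasDerivAt_id x).const_mul a).add_const z
  refine ((((hd.const_add S).fun_inv hSt).sub (hd.fun_inv ht)).const_mul a).congr_deriv ?_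
  ring

theorem antitoneOn_inv_sq_sub_inv_add_sq {S : ℝ} (hS : 0 ≤ S) :
    AntitoneOn (fun t ↦ (t ^ 2)⁻¹ - ((S + t) ^ 2)⁻¹) (Ioi 0) := by
  intro t₁ (ht₁ : 0 < t₁) t₂ (ht₂ : 0 < t₂) h
  have factor : ∀ t : ℝ, 0 < t →
      (t ^ 2)⁻¹ - ((S + t) ^ 2)⁻¹ = S / (t * (S + t)) * (t⁻¹ + (S + t)⁻¹) := by
    intro t ht
    have : S + t ≠ 0 := by positivity
    field_simp
    ring
  simp only [factor t₁ ht₁, factor t₂ ht₂]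
  apply mul_le_mul _ _ (by positivity) (by positivity)
  · exact div_le_div_of_nonneg_left hS (by positivity) (by gcongr)
  · gcongr

theorem inv_sq_sub_inv_add_sq_eq {S T : ℝ} (hT : T ≠ 0) (hST : S + T ≠ 0) :
    (T ^ 2)⁻¹ - ((S + T) ^ 2)⁻¹ = S * (S + 2 * T) / ((S + T) * T) ^ 2 := by
  field_simp
  ring

theorem convexOn_Icc_neg_mul_log_one_add_div_sub_mul_sq {M c w L st : ℝ} (hc : 0 < c)
    (hw : 0 ≤ w) (hL : L ≤ w / (2 * (M + c) ^ 2)) :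
    ConvexOn ℝ (Icc 0 M) (fun s ↦ -w * log (1 + s / c) - L * (s - st) ^ 2) := by
  refine convexOn_of_hasDerivAt2_nonneg (convex_Icc 0 M)
    (f' := fun x ↦ -w * (c + x)⁻¹ - L * (2 * (x - st)))
    (f'' := fun x ↦ -w * -((c + x) ^ 2)⁻¹ - L * 2) ?_ ?_ ?_
  · rintro x ⟨hx₀, -⟩
    exact ((hasDerivAt_log_one_add_div_const hc.ne' (by positivity)).const_mul (-w)).sub
      ((hasDerivAt_sub_sq st x).const_mul L)
  · rintro x ⟨hx₀, -⟩
    exact ((hasDerivAt_inv_const_add (by positivity)).const_mul (-w)).sub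
      ((((hasDerivAt_id x).sub_const st).const_mul 2).const_mul L |>.congr_deriv (by simp))
  · rintro x ⟨hx₀, hxM⟩
    refine sub_nonneg.2 ?_
    calc L * 2 ≤ w / (c + M) ^ 2 := by
          rw [mul_comm 2, ← div_div, add_comm] at hL; linarith
      _ ≤ w / (c + x) ^ 2 := by gcongr
      _ = -w * -((c + x) ^ 2)⁻¹ := by ring

theorem concaveOn_Icc_neg_sum_mul_log_one_add_div_affine_add_mul_sq {ι : Type*} (I : Finset ι)
    {M L st : ℝ} {w a S z : ι → ℝ} (hw : ∀ m ∈ I, 0 ≤ w m) (ha : ∀ m ∈ I, 0 ≤ a m)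
    (hS : ∀ m ∈ I, 0 ≤ S m) (hz : ∀ m ∈ I, 0 < z m)
    (hL : 2 * L ≤ ∑ m ∈ I, w m * (a m ^ 2 *
      (((a m * M + z m) ^ 2)⁻¹ - ((S m + (a m * M + z m)) ^ 2)⁻¹))) :
    ConcaveOn ℝ (Icc 0 M)
      (fun s ↦ -(∑ m ∈ I, w m * log (1 + S m / (a m * s + z m))) + L * (s - st) ^ 2) := by
  have ht : ∀ m ∈ I, ∀ x ∈ Icc 0 M, 0 < a m * x + z m := fun m hm x hx ↦
    add_pos_of_nonneg_of_pos (mul_nonneg (ha m hm) hx.1) (hz m hm)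
  have hSt : ∀ m ∈ I, ∀ x ∈ Icc 0 M, S m + (a m * x + z m) ≠ 0 := fun m hm x hx ↦
    (add_pos_of_nonneg_of_pos (hS m hm) (ht m hm x hx)).ne'
  refine concaveOn_of_hasDerivAt2_nonpos (convex_Icc 0 M)
    (f' := fun x ↦ -(∑ m ∈ I, w m * (a m * ((S m + (a m * x + z m))⁻¹ - (a m * x + z m)⁻¹)))
      + L * (2 * (x - st)))
    (f'' := fun x ↦ -(∑ m ∈ I, w m * (a m ^ 2 *
      (((a m * x + z m) ^ 2)⁻¹ - ((S m + (a m * x + z m)) ^ 2)⁻¹))) + L * 2) ?_ ?_ ?_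
  · intro x hx
    refine (HasDerivAt.fun_sum fun m hm ↦ ?_).neg.add ((hasDerivAt_sub_sq st x).const_mul L)
    exact (hasDerivAt_log_one_add_div_affine (ht m hm x hx).ne' (hSt m hm x hx)).const_mul (w m)
  · intro x hx
    refine (HasDerivAt.fun_sum fun m hm ↦ ?_).neg.add
      ((((hasDerivAt_id x).sub_const st).const_mul 2).const_mul L |>.congr_deriv (by simp))
    exact (hasDerivAt_mul_inv_add_affine_sub_inv_affine (ht m hm x hx).ne'
      (hSt m hm x hx)).const_mul (w m)
  · intro x hx
    suffices ∑ m ∈ I, w m * (a m ^ 2 *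
        (((a m * M + z m) ^ 2)⁻¹ - ((S m + (a m * M + z m)) ^ 2)⁻¹)) ≤
        ∑ m ∈ I, w m * (a m ^ 2 *
        (((a m * x + z m) ^ 2)⁻¹ - ((S m + (a m * x + z m)) ^ 2)⁻¹)) by linarith
    refine Finset.sum_le_sum fun m hm ↦ ?_
    have hxM : a m * x + z m ≤ a m * M + z m := by
      gcongr
      exacts [ha m hm, hx.2]
    have hmono := antitoneOn_inv_sq_sub_inv_add_sq (hS m hm) (ht m hm x hx)
      (ht m hm M ⟨hx.1.trans hx.2, le_rfl⟩) hxM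
    exact mul_le_mul_of_nonneg_left (mul_le_mul_of_nonneg_left hmono (sq_nonneg _)) (hw m hm)

theorem IASB2_convex_variant_tuning_valid_general
    {ι : Type*} (I : Finset ι)
    (M st w intn : ℝ) (wI aI sI zI : ι → ℝ)
    (hM : 0 < M)
    (hw : 0 < w) (hintn : 0 < intn)
    (hwI : ∀ m ∈ I, 0 < wI m) (haI : ∀ m ∈ I, 0 ≤ aI m)
    (hsI : ∀ m ∈ I, 0 < sI m) (hzI : ∀ m ∈ I, 0 < zI m)
    (Lstar L : ℝ)
    (hLstar : Lstar = ∑ m ∈ I, wI m * sI m * (aI m) ^ 2 * (sI m + 2 * (aI m * M + zI m))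
        / (2 * ((sI m + aI m * M + zI m) * (aI m * M + zI m)) ^ 2))
    (hL : L = min (w / (2 * (M + intn) ^ 2)) Lstar)
    (f1IASB2 f2IASB2 : ℝ → ℝ)
    (hf1 : f1IASB2 = fun s => -w * Real.log (1 + s / intn) - L * (s - st) ^ 2)
    (hf2 : f2IASB2 = fun s =>
        -(∑ m ∈ I, wI m * Real.log (1 + sI m / (aI m * s + zI m))) + L * (s - st) ^ 2) :
    ConvexOn ℝ (Set.Icc 0 M) f1IASB2 ∧ ConcaveOn ℝ (Set.Icc 0 M) f2IASB2 := by
  have hLstar' : 2 * Lstar = ∑ m ∈ I, wI m * (aI m ^ 2 *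
      (((aI m * M + zI m) ^ 2)⁻¹ - ((sI m + (aI m * M + zI m)) ^ 2)⁻¹)) := by
    rw [hLstar, Finset.mul_sum]
    refine Finset.sum_congr rfl fun m hm ↦ ?_
    have hT : 0 < aI m * M + zI m :=
      add_pos_of_nonneg_of_pos (mul_nonneg (haI m hm) hM.le) (hzI m hm)
    rw [inv_sq_sub_inv_add_sq_eq hT.ne' (add_pos (hsI m hm) hT).ne', ← add_assoc]
    field_simp
  subst hf1 hf2
  refine ⟨convexOn_Icc_neg_mul_log_one_add_div_sub_mul_sq hintn hw.le
      (hL ▸ min_le_left _ _), ?_⟩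
  refine concaveOn_Icc_neg_sum_mul_log_one_add_div_affine_add_mul_sq I
    (fun m hm ↦ (hwI m hm).le) haI (fun m hm ↦ (hsI m hm).le) hzI ?_
  linarith [hL ▸ min_le_right (w / (2 * (M + intn) ^ 2)) Lstar]

/-- Validity of the convex-variant IASB2 tuning value (equation (39)): with
`L = min(w/(2·(M + int)²), L*)` where `L*` is the value of equation (38),
(i) `f1_IASB2(s) = −w·log(1 + s/int) − L·(s − s̃)²` is convex on `[0, M]`, and
(ii) `f2_IASB2(s) = −Σ_{m∈I} w_m·log(1 + s̃_m/int_m(s)) + L·(s − s̃)²` is concave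
on `[0, M]`. -/
theorem IASB2_convex_variant_tuning_valid
    {ι : Type*} (I : Finset ι)
    (M st w intn : ℝ) (wI aI sI zI : ι → ℝ)
    (hM : 0 < M) (hst : st ∈ Set.Icc 0 M)
    (hw : 0 < w) (hintn : 0 < intn)
    (hwI : ∀ m ∈ I, 0 < wI m) (haI : ∀ m ∈ I, 0 ≤ aI m)
    (hsI : ∀ m ∈ I, 0 < sI m) (hzI : ∀ m ∈ I, 0 < zI m)
    (Lstar L : ℝ)
    (hLstar : Lstar = ∑ m ∈ I, wI m * sI m * (aI m) ^ 2 * (sI m + 2 * (aI m * M + zI m))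
        / (2 * ((sI m + aI m * M + zI m) * (aI m * M + zI m)) ^ 2))
    (hL : L = min (w / (2 * (M + intn) ^ 2)) Lstar)
    (f1IASB2 f2IASB2 : ℝ → ℝ)
    (hf1 : f1IASB2 = fun s => -w * Real.log (1 + s / intn) - L * (s - st) ^ 2)
    (hf2 : f2IASB2 = fun s =>
        -(∑ m ∈ I, wI m * Real.log (1 + sI m / (aI m * s + zI m))) + L * (s - st) ^ 2) :
    ConvexOn ℝ (Set.Icc 0 M) f1IASB2 ∧ ConcaveOn ℝ (Set.Icc 0 M) f2IASB2 :=
  IASB2_convex_variant_tuning_valid_general I M st w intn wI aI sI zI hM hw hintn hwI haI hsI hzI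
    Lstar L hLstar hL f1IASB2 f2IASB2 hf1 hf2
end

section
/- Lemma 3 (IASB3 is tighter than IASB1): In the per-user per-tone spectrum optimization setup, let q ∈ I be a reference user. Then for all s ∈ [0, M]: f(s) ≤ f^IASB3(s) ≤ f^IASB1(s). -/
/-!
Each crosstalk term `w log(1 + c / (a s + z))` is convex in `s` and hence lies above its tangent
lines. Replacing `f₁` by `f₁ + g` in `f₁ + LIN(f - f₁)` adds exactly the gap between `g` and its
tangent at `s̃`. Now `f` is its own such approximation, `f1_IASB3` is `f` plus the crosstalk terms
of the users `m ≠ q`, and `f1_IASB1` is `f1_IASB3` plus the crosstalk term of `q`; each step adds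
a nonnegative gap.
-/

open Real

/-- The paper's `f₁ + LIN(f - f₁)`, with `LIN` the linearization at `x₀`. -/
noncomputable def partialLinearization (f f₁ : ℝ → ℝ) (x₀ : ℝ) : ℝ → ℝ :=
  fun s => f₁ s + (f x₀ - f₁ x₀) + deriv (fun x => f x - f₁ x) x₀ * (s - x₀)

theorem partialLinearization_self (f : ℝ → ℝ) (x₀ s : ℝ) :
    partialLinearization f f x₀ s = f s := by
  simp [partialLinearization]

theorem partialLinearization_add {f f₁ g : ℝ → ℝ} {x₀ : ℝ}
    (hf₁ : DifferentiableAt ℝ (fun x => f x - f₁ x) x₀) (hg : DifferentiableAt ℝ g x₀) (s : ℝ) :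
    partialLinearization f (f₁ + g) x₀ s =
      partialLinearization f f₁ x₀ s + (g s - (g x₀ + deriv g x₀ * (s - x₀))) := by
  have hderiv : deriv (fun x => f x - (f₁ + g) x) x₀ =
      deriv (fun x => f x - f₁ x) x₀ - deriv g x₀ := by
    simp only [Pi.add_apply, ← sub_sub]
    exact (hf₁.hasDerivAt.sub hg.hasDerivAt).deriv
  unfold partialLinearization
  rw [hderiv, Pi.add_apply, Pi.add_apply]
  ring

theorem partialLinearization_le_add {f f₁ g : ℝ → ℝ} {x₀ s : ℝ}
    (hf₁ : DifferentiableAt ℝ (fun x => f x - f₁ x) x₀) (hg : DifferentiableAt ℝ g x₀)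
    (hg_tangent : g x₀ + deriv g x₀ * (s - x₀) ≤ g s) :
    partialLinearization f f₁ x₀ s ≤ partialLinearization f (f₁ + g) x₀ s := by
  rw [partialLinearization_add hf₁ hg]
  linarith

theorem sum_add_deriv_mul_sub_le {ι : Type*} {J : Finset ι} {G : ι → ℝ → ℝ} {x₀ s : ℝ}
    (hG : ∀ m ∈ J, DifferentiableAt ℝ (G m) x₀)
    (hG_tangent : ∀ m ∈ J, G m x₀ + deriv (G m) x₀ * (s - x₀) ≤ G m s) :
    (∑ m ∈ J, G m) x₀ + deriv (∑ m ∈ J, G m) x₀ * (s - x₀) ≤ (∑ m ∈ J, G m) s := by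
  rw [(HasDerivAt.sum fun m hm => (hG m hm).hasDerivAt).deriv]
  simp only [Finset.sum_apply, Finset.sum_mul, ← Finset.sum_add_distrib]
  exact Finset.sum_le_sum hG_tangent

theorem hasDerivAt_log_one_add_div {c u : ℝ} (hc : 0 ≤ c) (hu : 0 < u) :
    HasDerivAt (fun v => log (1 + c / v)) (-c / (u * (u + c))) u := by
  have h := (((hasDerivAt_inv hu.ne').const_mul c).const_add 1).log
    (by positivity : 1 + c * u⁻¹ ≠ 0)
  convert h using 1
  · simp only [div_eq_mul_inv]
  · field_simp

theorem log_one_add_div_add_mul_sub_le {c p u : ℝ} (hc : 0 ≤ c) (hp : 0 < p) (hu : 0 < u) :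
    log (1 + c / p) + -c / (p * (p + c)) * (u - p) ≤ log (1 + c / u) := by
  have hratio : log (1 + c / u) - log (1 + c / p) = log ((u + c) * p / (u * (p + c))) := by
    rw [← log_div (by positivity) (by positivity)]
    congr 1
    field_simp
  have hlog := one_sub_inv_le_log_of_pos (x := (u + c) * p / (u * (p + c))) (by positivity)
  have hgap : 1 - ((u + c) * p / (u * (p + c)))⁻¹ - -c / (p * (p + c)) * (u - p)
      = c * (u - p) ^ 2 / (p * (p + c) * (u + c)) := by
    field_simp
    ring
  have : 0 ≤ c * (u - p) ^ 2 / (p * (p + c) * (u + c)) := by positivity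
  linarith

/-- `crosstalkRate w_m a_m s̃_m z_m s = w_m log(1 + s̃_m / int_m(s))`. -/
noncomputable def crosstalkRate (w a c z : ℝ) (s : ℝ) : ℝ :=
  w * log (1 + c / (a * s + z))

theorem hasDerivAt_crosstalkRate {w a c z x : ℝ} (hc : 0 ≤ c) (hx : 0 < a * x + z) :
    HasDerivAt (crosstalkRate w a c z)
      (w * (-c / ((a * x + z) * (a * x + z + c)) * a)) x := by
  have haffine : HasDerivAt (fun s => a * s + z) a x := by
    simpa using ((hasDerivAt_id x).const_mul a).add_const z
  exact ((hasDerivAt_log_one_add_div hc hx).comp x haffine).const_mul w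

theorem crosstalkRate_add_deriv_mul_sub_le {w a c z x s : ℝ} (hw : 0 ≤ w) (hc : 0 ≤ c)
    (hx : 0 < a * x + z) (hs : 0 < a * s + z) :
    crosstalkRate w a c z x + deriv (crosstalkRate w a c z) x * (s - x) ≤
      crosstalkRate w a c z s := by
  rw [(hasDerivAt_crosstalkRate hc hx).deriv]
  have h := log_one_add_div_add_mul_sub_le hc hx hs
  unfold crosstalkRate
  calc w * log (1 + c / (a * x + z)) + w * (-c / ((a * x + z) * (a * x + z + c)) * a) * (s - x)
      = w * (log (1 + c / (a * x + z)) +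
          -c / ((a * x + z) * (a * x + z + c)) * (a * s + z - (a * x + z))) := by ring
    _ ≤ w * log (1 + c / (a * s + z)) := mul_le_mul_of_nonneg_left h hw

theorem IASB3_tighter_than_IASB1_general
    {ι : Type*} (I : Finset ι)
    (M st w intn : ℝ) (wI aI sI zI : ι → ℝ)
    (hst : st ∈ Set.Icc 0 M)
    (hwI : ∀ m ∈ I, 0 < wI m) (haI : ∀ m ∈ I, 0 ≤ aI m)
    (hsI : ∀ m ∈ I, 0 < sI m) (hzI : ∀ m ∈ I, 0 < zI m)
    (q : ι) (hq : q ∈ I)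
    (f f1IASB1 f1IASB3 fIASB1 fIASB3 : ℝ → ℝ)
    (hf : f = fun s => -w * Real.log (1 + s / intn)
        - ∑ m ∈ I, wI m * Real.log (1 + sI m / (aI m * s + zI m)))
    (hf1IASB1 : f1IASB1 = fun s => -w * Real.log (1 + s / intn))
    (hf1IASB3 : f1IASB3 = fun s => -w * Real.log (1 + s / intn)
        - wI q * Real.log (1 + sI q / (aI q * s + zI q)))
    (hfIASB1 : fIASB1 = fun s => f1IASB1 s + (f st - f1IASB1 st)
        + deriv (fun x => f x - f1IASB1 x) st * (s - st))
    (hfIASB3 : fIASB3 = fun s => f1IASB3 s + (f st - f1IASB3 st)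
        + deriv (fun x => f x - f1IASB3 x) st * (s - st)) :
    ∀ s ∈ Set.Icc 0 M, f s ≤ fIASB3 s ∧ fIASB3 s ≤ fIASB1 s := by
  classical
  rintro s ⟨hs, -⟩
  set G : ι → ℝ → ℝ := fun m => crosstalkRate (wI m) (aI m) (sI m) (zI m)
  have hint : ∀ m ∈ I, ∀ x, 0 ≤ x → 0 < aI m * x + zI m := fun m hm x hx => by
    have := haI m hm; have := hzI m hm; positivity
  have hG : ∀ m ∈ I, DifferentiableAt ℝ (G m) st := fun m hm =>
    (hasDerivAt_crosstalkRate (hsI m hm).le (hint m hm st hst.1)).differentiableAt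
  have hG_tangent : ∀ m ∈ I, G m st + deriv (G m) st * (s - st) ≤ G m s := fun m hm =>
    crosstalkRate_add_deriv_mul_sub_le (hwI m hm).le (hsI m hm).le (hint m hm st hst.1)
      (hint m hm s hs)
  set R : ℝ → ℝ := ∑ m ∈ I.erase q, G m
  have hR : DifferentiableAt ℝ R st :=
    DifferentiableAt.sum fun m hm => hG m (Finset.mem_of_mem_erase hm)
  have h3 : f1IASB3 = f + R := by
    funext x
    simp only [hf, hf1IASB3, R, G, crosstalkRate, Pi.add_apply, Finset.sum_apply,
      ← Finset.add_sum_erase I _ hq]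
    ring
  have h1 : f1IASB1 = f1IASB3 + G q := by
    funext x
    simp only [hf1IASB1, hf1IASB3, G, crosstalkRate, Pi.add_apply]
    ring
  subst hfIASB1 hfIASB3
  constructor
  · calc f s = partialLinearization f f st s := (partialLinearization_self f st s).symm
      _ ≤ partialLinearization f (f + R) st s :=
          partialLinearization_le_add (by simp) hR
            (sum_add_deriv_mul_sub_le (fun m hm => hG m (Finset.mem_of_mem_erase hm))
              fun m hm => hG_tangent m (Finset.mem_of_mem_erase hm))
      _ = partialLinearization f f1IASB3 st s := by rw [h3]
  · show partialLinearization f f1IASB3 st s ≤ partialLinearization f f1IASB1 st s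
    rw [h1]
    exact partialLinearization_le_add (by simpa [h3] using hR.neg) (hG q hq) (hG_tangent q hq)

/-- Lemma 3 (IASB3 is tighter than IASB1): in the per-user per-tone spectrum
optimization setup, with reference user `q ∈ I`, the IASB3 approximation upper
bounds the true objective `f` on `[0, M]` and is itself upper bounded by the
IASB1 approximation. Here `f^X = f1_X + LIN(f − f1_X)` with `LIN` the
linearization at `s̃`. -/
theorem IASB3_tighter_than_IASB1
    {ι : Type*} (I : Finset ι)
    (M st w intn : ℝ) (wI aI sI zI : ι → ℝ)
    (hM : 0 < M) (hst : st ∈ Set.Icc 0 M)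
    (hw : 0 < w) (hintn : 0 < intn)
    (hwI : ∀ m ∈ I, 0 < wI m) (haI : ∀ m ∈ I, 0 ≤ aI m)
    (hsI : ∀ m ∈ I, 0 < sI m) (hzI : ∀ m ∈ I, 0 < zI m)
    (q : ι) (hq : q ∈ I)
    (f f1IASB1 f1IASB3 fIASB1 fIASB3 : ℝ → ℝ)
    (hf : f = fun s => -w * Real.log (1 + s / intn)
        - ∑ m ∈ I, wI m * Real.log (1 + sI m / (aI m * s + zI m)))
    (hf1IASB1 : f1IASB1 = fun s => -w * Real.log (1 + s / intn))
    (hf1IASB3 : f1IASB3 = fun s => -w * Real.log (1 + s / intn)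
        - wI q * Real.log (1 + sI q / (aI q * s + zI q)))
    (hfIASB1 : fIASB1 = fun s => f1IASB1 s + (f st - f1IASB1 st)
        + deriv (fun x => f x - f1IASB1 x) st * (s - st))
    (hfIASB3 : fIASB3 = fun s => f1IASB3 s + (f st - f1IASB3 st)
        + deriv (fun x => f x - f1IASB3 x) st * (s - st)) :
    ∀ s ∈ Set.Icc 0 M, f s ≤ fIASB3 s ∧ fIASB3 s ≤ fIASB1 s :=
  IASB3_tighter_than_IASB1_general I M st w intn wI aI sI zI hst hwI haI hsI hzI q hq f f1IASB1
    f1IASB3 fIASB1 fIASB3 hf hf1IASB1 hf1IASB3 hfIASB1 hfIASB3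
end

section
/- Lemma 4 (the IASB4 remainder lies below its tangent): In the per-user per-tone spectrum optimization setup, let q ∈ I and set x̃_q = s̃_q/int_q(s̃), α_q = x̃_q/(1 + x̃_q), c_q = w_q·(log(1 + x̃_q) − α_q·log(x̃_q)). Define f2_IASB4(s) = w_q·α_q·log(s̃_q/int_q(s)) + c_q − Σ_{m∈I} w_m·log(1 + s̃_m/int_m(s)). Then f2_IASB4 is upper bounded on [0, M] by its tangent line at s̃: f2_IASB4(s) ≤ f2_IASB4(s̃) + f2_IASB4′(s̃)·(s − s̃) for all s ∈ [0, M]. -/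
/-!
Write `x(s) = sI q / (aI q * s + zI q)` and `x̃ = x(st)`. Each map
`s ↦ log (1 + b / (a * s + z))` is convex, so the subtracted sum lies below its tangent at `st`,
with slack at least the `q`-th gap. That gap absorbs the first term: `αq = x̃ / (1 + x̃)` is the
weight for which `x ↦ αq * log x - log (1 + x)` is maximal at `x̃` (the SCALE inequality, i.e.
concavity of `log`), and it makes the slope of `s ↦ αq * log x(s)` at `st` equal to that of
`s ↦ log (1 + x(s))`.
-/

open Real Finset

lemma log_one_add_div_tangent_le {b u v : ℝ} (hb : 0 ≤ b) (hu : 0 < u) (hv : 0 < v) :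
    log (1 + b / v) + (1 / (v + b) - 1 / v) * (u - v) ≤ log (1 + b / u) := by
  have hr : 0 < (1 + b / u) / (1 + b / v) := by positivity
  have hlog := one_sub_inv_le_log_of_pos hr
  rw [log_div (by positivity) (by positivity)] at hlog
  have hgap : 1 - ((1 + b / u) / (1 + b / v))⁻¹ - (1 / (v + b) - 1 / v) * (u - v)
      = b * (v - u) ^ 2 / (v * (u + b) * (v + b)) := by
    field_simp
    ring
  have : 0 ≤ b * (v - u) ^ 2 / (v * (u + b) * (v + b)) := by positivity
  linarith

lemma log_one_add_div_affine_tangent_le {a b z s t : ℝ} (hb : 0 ≤ b)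
    (hs : 0 < a * s + z) (ht : 0 < a * t + z) :
    log (1 + b / (a * t + z)) + (1 / (a * t + z + b) - 1 / (a * t + z)) * a * (s - t)
      ≤ log (1 + b / (a * s + z)) := by
  convert log_one_add_div_tangent_le hb hs ht using 2
  ring

lemma scale_le_log_one_add {x x₀ : ℝ} (hx : 0 < x) (hx₀ : 0 < x₀) :
    x₀ / (1 + x₀) * log x + (log (1 + x₀) - x₀ / (1 + x₀) * log x₀)
      ≤ log (1 + x) := by
  have hα : x₀ / (1 + x₀) ≤ 1 := by rw [div_le_one (by positivity)]; linarith
  have hconc := strictConcaveOn_log_Ioi.concaveOn.2 (Set.mem_Ioi.2 (div_pos hx hx₀))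
    (Set.mem_Ioi.2 one_pos) (by positivity) (sub_nonneg.2 hα) (add_sub_cancel _ _)
  have hmean : (x₀ / (1 + x₀)) • (x / x₀) + (1 - x₀ / (1 + x₀)) • (1 : ℝ)
      = (1 + x) / (1 + x₀) := by
    simp only [smul_eq_mul]
    field_simp
    ring
  rw [hmean, smul_eq_mul, smul_eq_mul, log_one, log_div hx.ne' hx₀.ne',
    log_div (by positivity) (by positivity)] at hconc
  linarith

lemma hasDerivAt_log_div_affine {a b z s : ℝ} (hb : 0 < b) (hs : 0 < a * s + z) :
    HasDerivAt (fun t => log (b / (a * t + z))) (-(a / (a * s + z))) s := by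
  have haff : HasDerivAt (fun t => a * t + z) a s := by
    simpa using ((hasDerivAt_id s).const_mul a).add_const z
  convert ((hasDerivAt_const s b).fun_div haff hs.ne').log (div_pos hb hs).ne' using 1
  field_simp
  ring

lemma hasDerivAt_log_one_add_div_affine_s10 {a b z s : ℝ} (hb : 0 ≤ b) (hs : 0 < a * s + z) :
    HasDerivAt (fun t => log (1 + b / (a * t + z)))
      ((1 / (a * s + z + b) - 1 / (a * s + z)) * a) s := by
  have haff : HasDerivAt (fun t => a * t + z) a s := by
    simpa using ((hasDerivAt_id s).const_mul a).add_const z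
  have hpos : 0 < 1 + b / (a * s + z) := by positivity
  convert (((hasDerivAt_const s b).fun_div haff hs.ne').const_add 1).log hpos.ne' using 1
  have : a * s + z + b ≠ 0 := by positivity
  field_simp
  ring

lemma weighted_sum_tangent_add_gap_le {ι : Type*} {I : Finset ι} {w D : ι → ℝ}
    {F : ι → ℝ → ℝ} {s t : ℝ} (hw : ∀ m ∈ I, 0 ≤ w m)
    (hF : ∀ m ∈ I, F m t + D m * (s - t) ≤ F m s) {q : ι} (hq : q ∈ I) :
    ∑ m ∈ I, w m * F m t + (∑ m ∈ I, w m * D m) * (s - t)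
        + w q * (F q s - (F q t + D q * (s - t))) ≤ ∑ m ∈ I, w m * F m s := by
  have hgap : ∀ m ∈ I, 0 ≤ w m * (F m s - (F m t + D m * (s - t))) :=
    fun m hm => mul_nonneg (hw m hm) (sub_nonneg.2 (hF m hm))
  have := single_le_sum hgap hq
  simp only [mul_sub, mul_add, sum_sub_distrib, sum_add_distrib, sum_mul, mul_assoc] at this ⊢
  linarith

theorem IASB4_remainder_below_tangent_general
    {ι : Type*} (I : Finset ι)
    (M st : ℝ) (wI aI sI zI : ι → ℝ)
    (hst : st ∈ Set.Icc 0 M)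
    (hwI : ∀ m ∈ I, 0 < wI m) (haI : ∀ m ∈ I, 0 ≤ aI m)
    (hsI : ∀ m ∈ I, 0 < sI m) (hzI : ∀ m ∈ I, 0 < zI m)
    (q : ι) (hq : q ∈ I)
    (xtq αq cq : ℝ)
    (hxtq : xtq = sI q / (aI q * st + zI q))
    (hαq : αq = xtq / (1 + xtq))
    (f2IASB4 : ℝ → ℝ)
    (hf2 : f2IASB4 = fun s => wI q * αq * Real.log (sI q / (aI q * s + zI q)) + cq
        - ∑ m ∈ I, wI m * Real.log (1 + sI m / (aI m * s + zI m))) :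
    ∀ s ∈ Set.Icc 0 M, f2IASB4 s ≤ f2IASB4 st + deriv f2IASB4 st * (s - st) := by
  intro s hs
  have hint_pos : ∀ t ∈ Set.Icc 0 M, ∀ m ∈ I, 0 < aI m * t + zI m := fun t ht m hm =>
    add_pos_of_nonneg_of_pos (mul_nonneg (haI m hm) ht.1) (hzI m hm)
  have hslope : wI q * αq * -(aI q / (aI q * st + zI q))
      = wI q * ((1 / (aI q * st + zI q + sI q) - 1 / (aI q * st + zI q)) * aI q) := by
    have := hint_pos st hst q hq
    have : aI q * st + zI q + sI q ≠ 0 := by have := hsI q hq; positivity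
    rw [hαq, hxtq]
    field_simp
    ring
  have hderiv : HasDerivAt f2IASB4 (wI q * αq * -(aI q / (aI q * st + zI q))
      - ∑ m ∈ I, wI m * ((1 / (aI m * st + zI m + sI m) - 1 / (aI m * st + zI m)) * aI m))
      st := by
    rw [hf2]
    exact (((hasDerivAt_log_div_affine (hsI q hq) (hint_pos st hst q hq)).const_mul _).add_const
      cq).fun_sub (HasDerivAt.fun_sum fun m hm =>
        (hasDerivAt_log_one_add_div_affine_s10 (hsI m hm).le (hint_pos st hst m hm)).const_mul (wI m))
  have hsum := weighted_sum_tangent_add_gap_le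
    (F := fun m t => log (1 + sI m / (aI m * t + zI m))) (fun m hm => (hwI m hm).le)
    (fun m hm => log_one_add_div_affine_tangent_le (hsI m hm).le (hint_pos s hs m hm)
      (hint_pos st hst m hm)) hq
  have hscale := mul_le_mul_of_nonneg_left
    (scale_le_log_one_add (div_pos (hsI q hq) (hint_pos s hs q hq))
      (hxtq ▸ div_pos (hsI q hq) (hint_pos st hst q hq))) (hwI q hq).le
  rw [← hαq, hxtq] at hscale
  rw [hderiv.deriv, hslope, hf2]
  linarith

/-- Lemma 4 (the IASB4 remainder lies below its tangent): in the per-user per-tone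
spectrum optimization setup, with reference user `q ∈ I`, `x̃_q = s̃_q/int_q(s̃)`,
`α_q = x̃_q/(1 + x̃_q)` and `c_q = w_q·(log(1 + x̃_q) − α_q·log(x̃_q))`, the function
`f2_IASB4(s) = w_q·α_q·log(s̃_q/int_q(s)) + c_q − Σ_{m∈I} w_m·log(1 + s̃_m/int_m(s))`
is upper bounded on `[0, M]` by its tangent line at `s̃`. -/
theorem IASB4_remainder_below_tangent
    {ι : Type*} (I : Finset ι)
    (M st w intn : ℝ) (wI aI sI zI : ι → ℝ)
    (hM : 0 < M) (hst : st ∈ Set.Icc 0 M)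
    (hw : 0 < w) (hintn : 0 < intn)
    (hwI : ∀ m ∈ I, 0 < wI m) (haI : ∀ m ∈ I, 0 ≤ aI m)
    (hsI : ∀ m ∈ I, 0 < sI m) (hzI : ∀ m ∈ I, 0 < zI m)
    (q : ι) (hq : q ∈ I)
    (xtq αq cq : ℝ)
    (hxtq : xtq = sI q / (aI q * st + zI q))
    (hαq : αq = xtq / (1 + xtq))
    (hcq : cq = wI q * (Real.log (1 + xtq) - αq * Real.log xtq))
    (f2IASB4 : ℝ → ℝ)
    (hf2 : f2IASB4 = fun s => wI q * αq * Real.log (sI q / (aI q * s + zI q)) + cq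
        - ∑ m ∈ I, wI m * Real.log (1 + sI m / (aI m * s + zI m))) :
    ∀ s ∈ Set.Icc 0 M, f2IASB4 s ≤ f2IASB4 st + deriv f2IASB4 st * (s - st) :=
  IASB4_remainder_below_tangent_general I M st wI aI sI zI hst hwI haI hsI hzI q hq xtq αq cq hxtq
    hαq f2IASB4 hf2
end

section
/- Lemma 5 (IASB4 is less tight than IASB3 and tighter than IASB1): In the per-user per-tone spectrum optimization setup, let q ∈ I be a reference user. Then for all s ∈ [0, M]: f(s) ≤ f^IASB3(s) ≤ f^IASB4(s) ≤ f^IASB1(s). -/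
/-!
Since `f^X = f + (LIN g - g)` for `g = f - f1_X`, the difference `f^Y - f^X` equals `h - LIN h`
for `h = f1_Y - f1_X`, so each inequality says that some `h` lies above its tangent at `s̃`.
For `f ≤ f^IASB3`, `h` is the crosstalk sum over `m ≠ q`, and each `log (1 + s̃_m / int_m(s))`
is convex in `s`. For `f^IASB4 ≤ f^IASB1`, `h` is a nonnegative multiple of the convex
`-log int_q(s)` plus a constant. For `f^IASB3 ≤ f^IASB4`, `h` has zero derivative at `s̃` by the
choice of `α_q`, and is minimal there because `t ↦ log (1 + e ^ t)` is convex.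
-/

open Real

/-- The tangent inequality of the convex function `t ↦ log (1 + e ^ t)` at `t = log x₀`. -/
theorem log_one_add_add_mul_log_sub_log_le {x₀ x : ℝ} (hx₀ : 0 < x₀) (hx : 0 < x) :
    log (1 + x₀) + x₀ / (1 + x₀) * (log x - log x₀) ≤ log (1 + x) := by
  set α := x₀ / (1 + x₀)
  have hα : α ∈ Set.Icc (0 : ℝ) 1 :=
    ⟨div_nonneg hx₀.le (by linarith), by rw [div_le_one (by linarith)]; linarith⟩
  have hconc := strictConcaveOn_log_Ioi.concaveOn.2 (Set.mem_Ioi.2 one_pos)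
    (Set.mem_Ioi.2 (div_pos hx hx₀)) (sub_nonneg.2 hα.2) hα.1 (sub_add_cancel 1 α)
  simp only [smul_eq_mul, log_one, mul_zero, zero_add, mul_one, log_div hx.ne' hx₀.ne'] at hconc
  have hsplit : 1 + x = (1 + x₀) * (1 - α + α * (x / x₀)) := by
    simp only [α]; field_simp; ring
  have hpos : 0 < 1 - α + α * (x / x₀) :=
    add_pos_of_nonneg_of_pos (sub_nonneg.2 hα.2) (mul_pos (by positivity) (div_pos hx hx₀))
  rw [hsplit, log_mul (by linarith) hpos.ne']
  linarith

def AboveTangentOn (g : ℝ → ℝ) (x₀ : ℝ) (S : Set ℝ) : Prop :=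
  DifferentiableAt ℝ g x₀ ∧ ∀ s ∈ S, g x₀ + deriv g x₀ * (s - x₀) ≤ g s

namespace AboveTangentOn

variable {g h : ℝ → ℝ} {x₀ : ℝ} {S T : Set ℝ}

theorem mono (hg : AboveTangentOn g x₀ S) (hTS : T ⊆ S) : AboveTangentOn g x₀ T :=
  ⟨hg.1, fun s hs => hg.2 s (hTS hs)⟩

theorem add (hg : AboveTangentOn g x₀ S) (hh : AboveTangentOn h x₀ S) :
    AboveTangentOn (fun x => g x + h x) x₀ S := by
  refine ⟨hg.1.add hh.1, fun s hs => ?_⟩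
  rw [deriv_fun_add hg.1 hh.1]
  linarith [hg.2 s hs, hh.2 s hs]

theorem add_const (hg : AboveTangentOn g x₀ S) (c : ℝ) :
    AboveTangentOn (fun x => g x + c) x₀ S := by
  refine ⟨hg.1.add_const c, fun s hs => ?_⟩
  rw [deriv_add_const]
  linarith [hg.2 s hs]

theorem sub_const (hg : AboveTangentOn g x₀ S) (c : ℝ) :
    AboveTangentOn (fun x => g x - c) x₀ S := by
  simpa only [sub_eq_add_neg] using hg.add_const (-c)

theorem const_mul (hg : AboveTangentOn g x₀ S) {c : ℝ} (hc : 0 ≤ c) :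
    AboveTangentOn (fun x => c * g x) x₀ S := by
  refine ⟨hg.1.const_mul c, fun s hs => ?_⟩
  rw [deriv_const_mul c hg.1, mul_assoc, ← mul_add]
  exact mul_le_mul_of_nonneg_left (hg.2 s hs) hc

theorem sum {ι : Type*} {I : Finset ι} {g : ι → ℝ → ℝ}
    (hg : ∀ i ∈ I, AboveTangentOn (g i) x₀ S) :
    AboveTangentOn (fun x => ∑ i ∈ I, g i x) x₀ S := by
  refine ⟨DifferentiableAt.fun_sum fun i hi => (hg i hi).1, fun s hs => ?_⟩
  rw [deriv_fun_sum fun i hi => (hg i hi).1, Finset.sum_mul, ← Finset.sum_add_distrib]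
  exact Finset.sum_le_sum fun i hi => (hg i hi).2 s hs

end AboveTangentOn

theorem aboveTangentOn_log_one_add_sub_mul_log {g : ℝ → ℝ} {g' x₀ : ℝ} (hg : HasDerivAt g g' x₀)
    (hx₀ : 0 < g x₀) :
    AboveTangentOn (fun s => log (1 + g s) - g x₀ / (1 + g x₀) * log (g s)) x₀
      {s | 0 < g s} := by
  have hd : HasDerivAt (fun s => log (1 + g s) - g x₀ / (1 + g x₀) * log (g s)) 0 x₀ := by
    refine (((hg.const_add 1).log (by positivity)).sub
      ((hg.log hx₀.ne').const_mul _)).congr_deriv ?_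
    field_simp
    ring
  refine ⟨hd.differentiableAt, fun s hs => ?_⟩
  rw [hd.deriv]
  linarith [log_one_add_add_mul_log_sub_log_le hx₀ hs]

theorem hasDerivAt_div_affine (p a z x₀ : ℝ) (hx₀ : a * x₀ + z ≠ 0) :
    HasDerivAt (fun s => p / (a * s + z)) (-(p * a) / (a * x₀ + z) ^ 2) x₀ := by
  simpa using (hasDerivAt_const x₀ p).fun_div
    (((hasDerivAt_id x₀).const_mul a).add_const z) hx₀

theorem aboveTangentOn_log_div_affine {p a z x₀ : ℝ} (hp : p ≠ 0) (hx₀ : 0 < a * x₀ + z) :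
    AboveTangentOn (fun s => log (p / (a * s + z))) x₀ {s | 0 < a * s + z} := by
  have hd : HasDerivAt (fun s => log (p / (a * s + z))) (-(a / (a * x₀ + z))) x₀ := by
    refine ((hasDerivAt_div_affine p a z x₀ hx₀.ne').log
      (div_ne_zero hp hx₀.ne')).congr_deriv ?_
    field_simp
  refine ⟨hd.differentiableAt, fun s (hs : 0 < a * s + z) => ?_⟩
  have hlog := log_le_sub_one_of_pos (div_pos hs hx₀)
  rw [log_div hs.ne' hx₀.ne', div_sub_one hx₀.ne'] at hlog
  have hslope : a / (a * x₀ + z) * (s - x₀) = (a * s + z - (a * x₀ + z)) / (a * x₀ + z) := by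
    ring
  dsimp only
  rw [hd.deriv, log_div hp hs.ne', log_div hp hx₀.ne', neg_mul, hslope]
  linarith

/-- `log (1 + p / y) = (log (1 + p / y) - α₀ log (p / y)) + α₀ log (p / y)`, a function with a
minimum at `x₀` plus a nonnegative multiple of a convex one. -/
theorem aboveTangentOn_log_one_add_div_affine {p a z x₀ : ℝ} (hp : 0 < p)
    (hx₀ : 0 < a * x₀ + z) :
    AboveTangentOn (fun s => log (1 + p / (a * s + z))) x₀ {s | 0 < a * s + z} := by
  have hmin := (aboveTangentOn_log_one_add_sub_mul_log (hasDerivAt_div_affine p a z x₀ hx₀.ne')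
    (div_pos hp hx₀)).mono (T := {s | 0 < a * s + z}) fun s hs => div_pos hp hs
  have hlog := (aboveTangentOn_log_div_affine hp.ne' hx₀).const_mul
    (c := p / (a * x₀ + z) / (1 + p / (a * x₀ + z))) (by positivity)
  convert hmin.add hlog using 2
  ring

/-- The paper's `f^X = f1_X + LIN (f - f1_X)`, with the linearization taken at `x₀`. -/
noncomputable def linApprox (f f₁ : ℝ → ℝ) (x₀ s : ℝ) : ℝ :=
  f₁ s + (f x₀ - f₁ x₀) + deriv (fun x => f x - f₁ x) x₀ * (s - x₀)

theorem linApprox_self (f : ℝ → ℝ) (x₀ s : ℝ) : linApprox f f x₀ s = f s := by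
  simp [linApprox]

theorem linApprox_le_linApprox {f f₁ f₂ : ℝ → ℝ} {x₀ s : ℝ} {S : Set ℝ}
    (hf₁ : DifferentiableAt ℝ (fun x => f x - f₁ x) x₀)
    (h : AboveTangentOn (fun x => f₂ x - f₁ x) x₀ S) (hs : s ∈ S) :
    linApprox f f₁ x₀ s ≤ linApprox f f₂ x₀ s := by
  have hsplit : (fun x => f x - f₂ x) = fun x => (f x - f₁ x) - (f₂ x - f₁ x) := by
    funext x; ring
  have htan := h.2 s hs
  simp only [linApprox, hsplit, deriv_fun_sub hf₁ h.1]
  linarith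

theorem Ici_zero_subset_setOf_affine_pos {a z : ℝ} (ha : 0 ≤ a) (hz : 0 < z) :
    Set.Ici 0 ⊆ {s | 0 < a * s + z} :=
  fun _ hs => add_pos_of_nonneg_of_pos (mul_nonneg ha hs) hz

theorem aboveTangentOn_sum_mul_log_one_add_div_affine {ι : Type*} (I : Finset ι)
    {w p a z : ι → ℝ} (hw : ∀ m ∈ I, 0 ≤ w m) (hp : ∀ m ∈ I, 0 < p m) (ha : ∀ m ∈ I, 0 ≤ a m)
    (hz : ∀ m ∈ I, 0 < z m) {x₀ : ℝ} (hx₀ : 0 ≤ x₀) :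
    AboveTangentOn (fun s => ∑ m ∈ I, w m * log (1 + p m / (a m * s + z m))) x₀ (Set.Ici 0) :=
  AboveTangentOn.sum fun m hm =>
    have hsub := Ici_zero_subset_setOf_affine_pos (ha m hm) (hz m hm)
    ((aboveTangentOn_log_one_add_div_affine (hp m hm) (hsub hx₀)).mono hsub).const_mul (hw m hm)

theorem IASB4_between_IASB3_and_IASB1_general
    {ι : Type*} (I : Finset ι)
    (M st w intn : ℝ) (wI aI sI zI : ι → ℝ)
    (hst : st ∈ Set.Icc 0 M)
    (hwI : ∀ m ∈ I, 0 < wI m) (haI : ∀ m ∈ I, 0 ≤ aI m)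
    (hsI : ∀ m ∈ I, 0 < sI m) (hzI : ∀ m ∈ I, 0 < zI m)
    (q : ι) (hq : q ∈ I)
    (xtq αq cq : ℝ)
    (hxtq : xtq = sI q / (aI q * st + zI q))
    (hαq : αq = xtq / (1 + xtq))
    (f f1IASB1 f1IASB3 f1IASB4 fIASB1 fIASB3 fIASB4 : ℝ → ℝ)
    (hf : f = fun s => -w * Real.log (1 + s / intn)
        - ∑ m ∈ I, wI m * Real.log (1 + sI m / (aI m * s + zI m)))
    (hf1IASB1 : f1IASB1 = fun s => -w * Real.log (1 + s / intn))
    (hf1IASB3 : f1IASB3 = fun s => -w * Real.log (1 + s / intn)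
        - wI q * Real.log (1 + sI q / (aI q * s + zI q)))
    (hf1IASB4 : f1IASB4 = fun s => -w * Real.log (1 + s / intn)
        - wI q * αq * Real.log (sI q / (aI q * s + zI q)) - cq)
    (hfIASB1 : fIASB1 = fun s => f1IASB1 s + (f st - f1IASB1 st)
        + deriv (fun x => f x - f1IASB1 x) st * (s - st))
    (hfIASB3 : fIASB3 = fun s => f1IASB3 s + (f st - f1IASB3 st)
        + deriv (fun x => f x - f1IASB3 x) st * (s - st))
    (hfIASB4 : fIASB4 = fun s => f1IASB4 s + (f st - f1IASB4 st)
        + deriv (fun x => f x - f1IASB4 x) st * (s - st)) :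
    ∀ s ∈ Set.Icc 0 M,
      f s ≤ fIASB3 s ∧ fIASB3 s ≤ fIASB4 s ∧ fIASB4 s ≤ fIASB1 s := by
  classical
  subst hfIASB1 hfIASB3 hfIASB4 hαq hxtq
  have hy := Ici_zero_subset_setOf_affine_pos (haI q hq) (hzI q hq)
  have hxq : 0 < sI q / (aI q * st + zI q) := div_pos (hsI q hq) (hy hst.1)
  have hα : 0 ≤ sI q / (aI q * st + zI q) / (1 + sI q / (aI q * st + zI q)) := by positivity
  have h3 : AboveTangentOn (fun x => f1IASB3 x - f x) st (Set.Ici 0) := by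
    have hI : ∀ m ∈ I.erase q, m ∈ I := fun _ => Finset.mem_of_mem_erase
    convert aboveTangentOn_sum_mul_log_one_add_div_affine (I.erase q)
      (fun m hm => (hwI m (hI m hm)).le) (fun m hm => hsI m (hI m hm))
      (fun m hm => haI m (hI m hm)) (fun m hm => hzI m (hI m hm)) hst.1 using 2 with x
    simp only [hf, hf1IASB3, ← Finset.add_sum_erase I _ hq]
    ring
  have h34 : AboveTangentOn (fun x => f1IASB4 x - f1IASB3 x) st (Set.Ici 0) := by
    convert (((aboveTangentOn_log_one_add_sub_mul_log (hasDerivAt_div_affine _ _ _ st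
      (hy hst.1).ne') hxq).mono fun s hs => div_pos (hsI q hq) (hy hs)).const_mul
      (hwI q hq).le).sub_const cq using 2 with x
    simp only [hf1IASB4, hf1IASB3]
    ring
  have h41 : AboveTangentOn (fun x => f1IASB1 x - f1IASB4 x) st (Set.Ici 0) := by
    convert (((aboveTangentOn_log_div_affine (hsI q hq).ne' (hy hst.1)).mono hy).const_mul
      (mul_nonneg (hwI q hq).le hα)).add_const cq using 2 with x
    simp only [hf1IASB4, hf1IASB1]
    ring
  have hd3 : DifferentiableAt ℝ (fun x => f x - f1IASB3 x) st := by
    simpa only [neg_sub] using h3.1.fun_neg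
  have hd4 : DifferentiableAt ℝ (fun x => f x - f1IASB4 x) st := by
    simpa only [sub_sub_sub_cancel_right] using hd3.fun_sub h34.1
  intro s hs
  exact ⟨(linApprox_self f st s).symm.trans_le (linApprox_le_linApprox (by simp) h3 hs.1),
    linApprox_le_linApprox hd3 h34 hs.1, linApprox_le_linApprox hd4 h41 hs.1⟩

/-- Lemma 5 (IASB4 is less tight than IASB3 and tighter than IASB1): in the
per-user per-tone spectrum optimization setup, with reference user `q ∈ I`, the
approximations satisfy `f ≤ f^IASB3 ≤ f^IASB4 ≤ f^IASB1` on `[0, M]`.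
Here `f^X = f1_X + LIN(f − f1_X)` with `LIN` the linearization at `s̃`. -/
theorem IASB4_between_IASB3_and_IASB1
    {ι : Type*} (I : Finset ι)
    (M st w intn : ℝ) (wI aI sI zI : ι → ℝ)
    (hM : 0 < M) (hst : st ∈ Set.Icc 0 M)
    (hw : 0 < w) (hintn : 0 < intn)
    (hwI : ∀ m ∈ I, 0 < wI m) (haI : ∀ m ∈ I, 0 ≤ aI m)
    (hsI : ∀ m ∈ I, 0 < sI m) (hzI : ∀ m ∈ I, 0 < zI m)
    (q : ι) (hq : q ∈ I)
    (xtq αq cq : ℝ)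
    (hxtq : xtq = sI q / (aI q * st + zI q))
    (hαq : αq = xtq / (1 + xtq))
    (hcq : cq = wI q * (Real.log (1 + xtq) - αq * Real.log xtq))
    (f f1IASB1 f1IASB3 f1IASB4 fIASB1 fIASB3 fIASB4 : ℝ → ℝ)
    (hf : f = fun s => -w * Real.log (1 + s / intn)
        - ∑ m ∈ I, wI m * Real.log (1 + sI m / (aI m * s + zI m)))
    (hf1IASB1 : f1IASB1 = fun s => -w * Real.log (1 + s / intn))
    (hf1IASB3 : f1IASB3 = fun s => -w * Real.log (1 + s / intn)
        - wI q * Real.log (1 + sI q / (aI q * s + zI q)))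
    (hf1IASB4 : f1IASB4 = fun s => -w * Real.log (1 + s / intn)
        - wI q * αq * Real.log (sI q / (aI q * s + zI q)) - cq)
    (hfIASB1 : fIASB1 = fun s => f1IASB1 s + (f st - f1IASB1 st)
        + deriv (fun x => f x - f1IASB1 x) st * (s - st))
    (hfIASB3 : fIASB3 = fun s => f1IASB3 s + (f st - f1IASB3 st)
        + deriv (fun x => f x - f1IASB3 x) st * (s - st))
    (hfIASB4 : fIASB4 = fun s => f1IASB4 s + (f st - f1IASB4 st)
        + deriv (fun x => f x - f1IASB4 x) st * (s - st)) :
    ∀ s ∈ Set.Icc 0 M,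
      f s ≤ fIASB3 s ∧ fIASB3 s ≤ fIASB4 s ∧ fIASB4 s ≤ fIASB1 s :=
  IASB4_between_IASB3_and_IASB1_general I M st w intn wI aI sI zI hst hwI haI hsI hzI q hq xtq αq cq
    hxtq hαq f f1IASB1 f1IASB3 f1IASB4 fIASB1 fIASB3 fIASB4 hf hf1IASB1 hf1IASB3 hf1IASB4 hfIASB1
    hfIASB3 hfIASB4
end
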